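/- arXiv:math/9811188 — 2 statements merged into one kernel-verified Lean document; each statement's English description precedes it below -/
import Mathlib

section
/- The map F(u,v) = (u(u-1), v, u^2(u-1)) is injective on the sphere S = {(u,v) ∈ C^2 : |u|^2 + |v|^2 = 4}. -/
/-! On the sphere, `F (u, v) = F (u', v')` forces `v = v'` and hence `‖u‖ = ‖u'‖`. With
`a = u (u - 1) = u' (u' - 1)`, the third coordinate gives `u a = u' a`, so `u = u'` unless `a = 0`;
in that case `u, u' ∈ {0, 1}`, two points of different norms. -/

noncomputable def F : ℂ × ℂ → ℂ × ℂ × ℂ := fun p => (p.1 * (p.1 - 1), p.2, p.1 ^ 2 * (p.1 - 1))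

theorem eq_or_mul_sub_one_eq_zero_of_mul_sub_one_eq {R : Type*} [CommRing R] [NoZeroDivisors R]
    {u u' : R} (h₁ : u * (u - 1) = u' * (u' - 1)) (h₂ : u ^ 2 * (u - 1) = u' ^ 2 * (u' - 1)) :
    u = u' ∨ u * (u - 1) = 0 := by
  have h : (u - u') * (u * (u - 1)) = 0 := by linear_combination h₂ - u' * h₁
  exact (mul_eq_zero.1 h).imp sub_eq_zero.1 id

theorem eq_of_mul_sub_one_eq_zero_of_norm_eq {R : Type*} [NormedRing R] [NormOneClass R]
    [NoZeroDivisors R] {u u' : R} (hu : u * (u - 1) = 0) (hu' : u' * (u' - 1) = 0)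
    (h : ‖u‖ = ‖u'‖) : u = u' := by
  rcases mul_eq_zero.1 hu with rfl | hu <;> rcases mul_eq_zero.1 hu' with rfl | hu'
  all_goals simp_all [sub_eq_zero]

theorem stmt_4 :
    Set.InjOn F {p : ℂ × ℂ | ‖p.1‖ ^ 2 + ‖p.2‖ ^ 2 = 4} := by
  rintro ⟨u, v⟩ hp ⟨u', v'⟩ hq h
  simp only [F, Prod.mk.injEq] at h
  obtain ⟨h₁, rfl, h₂⟩ := h
  have hnorm : ‖u‖ = ‖u'‖ := by
    simp only [Set.mem_ofPred_eq] at hp hq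
    exact (sq_eq_sq₀ (norm_nonneg u) (norm_nonneg u')).1 (by linarith)
  rcases eq_or_mul_sub_one_eq_zero_of_mul_sub_one_eq h₁ h₂ with rfl | h₀
  · rfl
  · rw [eq_of_mul_sub_one_eq_zero_of_norm_eq h₀ (h₁ ▸ h₀) hnorm]
end

section
/- The image F(B) of the closed ball B = {(u,v) : |u|^2 + |v|^2 ≤ 4} under F(u,v) = (u(u-1), v, u^2(u-1)) contains the singular points (0,t,0) of the hypersurface {z^2 - zx^2 - x^3 = 0} for all t with |t| ≤ 2, and such singular points are not contained in F(S) for |t|^2 < 3. -/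
theorem stmt_13 :
    (∀ t : ℂ, ‖t‖ ≤ 2 → (0, t, 0) ∈ F '' {p : ℂ × ℂ | ‖p.1‖ ^ 2 + ‖p.2‖ ^ 2 ≤ 4}) ∧
    (∀ t : ℂ, ‖t‖ ^ 2 < 3 → (0, t, 0) ∉ F '' {p : ℂ × ℂ | ‖p.1‖ ^ 2 + ‖p.2‖ ^ 2 = 4}) := by
  constructor
  · intro t ht
    refine ⟨(0, t), ?_, ?_⟩
    · simp only [Set.mem_setOf_eq, norm_zero]
      nlinarith [norm_nonneg t]
    · simp [F]
  · rintro t ht ⟨⟨u, v⟩, hmem, heq⟩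
    simp only [F, Prod.mk.injEq] at heq
    obtain ⟨h1, h2, h3⟩ := heq
    simp only [Set.mem_setOf_eq] at hmem
    have hu : u = 0 ∨ u = 1 := by
      rcases mul_eq_zero.1 h1 with h | h
      · exact Or.inl h
      · exact Or.inr (by linear_combination h)
    rcases hu with h | h
    · rw [h, h2] at hmem
      simp at hmem
      nlinarith
    · rw [h, h2] at hmem
      simp at hmem
      nlinarith
end
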